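/- For every integer k ≥ 1 and every positive integer n, S_{2k}(n) = S_2(n) · Σ_{r=1}^{k} b_{k,r} · (S_1(n))^(r-1), as an identity of rational numbers, where b_{k,r} = Σ_{m=r}^{k} (3 · 2^r / (2m+1)!) · R(k,m) · Ps_m^(r). -/

import Mathlib

/-- `S k n = 1^k + 2^k + ⋯ + n^k`, the sum of the `k`-th powers of the first `n`
positive integers. -/
def S (k n : ℕ) : ℕ := ∑ i ∈ Finset.Icc 1 n, i ^ k

/-- `R k m = ∑_{j=0}^m (-1)^j C(2m, j) (m-j)^{2k}`, the sequence A304330. -/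
def R (k m : ℕ) : ℤ :=
  ∑ j ∈ Finset.range (m + 1),
    (-1 : ℤ) ^ j * ((2 * m).choose j : ℤ) * (((m - j) ^ (2 * k) : ℕ) : ℤ)

/-- The (signed) Legendre-Stirling number of the first kind `Ps_m^{(r)}`: the
coefficient of `x^r` in `∏_{j=0}^{m-1} (x − j(j+1))`. -/
noncomputable def Ps (m r : ℕ) : ℤ :=
  (∏ j ∈ Finset.range m, (Polynomial.X - Polynomial.C ((j * (j + 1) : ℕ) : ℤ))).coeff r

/-- The Faulhaber coefficients `b_{k,r}`. -/
noncomputable def b (k r : ℕ) : ℚ :=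
  ∑ m ∈ Finset.Icc r k,
    (3 * 2 ^ r / (Nat.factorial (2 * m + 1) : ℚ)) * (R k m : ℚ) * (Ps m r : ℚ)

/-
Write `T(2k, 2m) = 2 R(k, m) / (2m)!` for the central factorial numbers. Then
`x ^ (2k) = ∑_{m ≤ k} T(2k, 2m) ∏_{j < m} (x² - j²)`: the coefficients satisfy the central
factorial recurrence, and the expansion stops at `m = k` because `2 R(k, m)` is a `2m`-th
finite difference of `x ^ (2k)`. Summed over `x = 1, …, n`, each product telescopes to
`(2n+1) / (2(2m+1)) · ∏_{j < m} (n(n+1) - j(j+1))`, a polynomial in `n(n+1) = 2 S_1(n)` with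
coefficients `Ps_m^(r)` and no constant term. Collecting powers of `S_1(n)` yields `b_{k,r}`.
-/

open Finset Nat

lemma R_eq_sum (k m : ℕ) :
    R k m =
      ∑ j ∈ range (m + 1), (-1 : ℤ) ^ j * (2 * m).choose j * ((m : ℤ) - j) ^ (2 * k) := by
  refine sum_congr rfl fun j hj ↦ ?_
  rw [Nat.cast_pow, Nat.cast_sub (by simpa [Nat.lt_succ_iff] using hj)]

lemma two_mul_R_eq_fwdDiff_iter {k : ℕ} (hk : k ≠ 0) (m : ℕ) :
    2 * R k m = (fwdDiff 1)^[2 * m] (fun x : ℤ ↦ x ^ (2 * k)) (-m) := by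
  -- The terms `j` and `2m - j` of the difference agree, and the middle one vanishes.
  set f : ℕ → ℤ := fun j ↦ (-1) ^ j * (2 * m).choose j * ((m : ℤ) - j) ^ (2 * k) with hf
  have hsymm : ∀ j < m, f (m + 1 + j) = f (m - 1 - j) := by
    intro j hj
    have hc : (2 * m).choose (m + 1 + j) = (2 * m).choose (m - 1 - j) := by
      rw [← Nat.choose_symm (by omega)]; congr 1; omega
    have hs : (-1 : ℤ) ^ (m + 1 + j) = (-1) ^ (m - 1 - j) := by
      rw [show m + 1 + j = (m - 1 - j) + 2 * (j + 1) by omega, pow_add, pow_mul]; simp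
    have hcast : ((m - 1 - j : ℕ) : ℤ) = m - 1 - j := by omega
    simp only [hf, hc, hs, hcast, Nat.cast_add, Nat.cast_one]
    rw [show (m : ℤ) - (m + 1 + j) = -((m : ℤ) - (m - 1 - j)) by ring,
      Even.neg_pow (even_two_mul k)]
  have hmid : f m = 0 := by simp [hf, hk]
  rw [fwdDiff_iter_eq_sum_shift, R_eq_sum]
  calc 2 * ∑ j ∈ range (m + 1), f j
      = ∑ j ∈ range (m + 1), f j + ∑ j ∈ range m, f (m + 1 + j) := by
        rw [sum_congr rfl fun j hj ↦ hsymm j (mem_range.1 hj), sum_range_reflect f m,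
          sum_range_succ, hmid]; ring
    _ = _ := by
        rw [← sum_range_add, show m + 1 + m = 2 * m + 1 by ring]
        refine sum_congr rfl fun j hj ↦ ?_
        have hj : j ≤ 2 * m := by simpa [Nat.lt_succ_iff] using hj
        have hsign : (-1 : ℤ) ^ (2 * m - j) = (-1) ^ j :=
          neg_one_pow_congr (by rw [Nat.even_sub hj]; simp)
        rw [smul_eq_mul, hf, hsign, nsmul_one,
          show -(m : ℤ) + j = -((m : ℤ) - j) by ring, Even.neg_pow (even_two_mul k)]

lemma R_eq_zero_of_lt {k m : ℕ} (hk : k ≠ 0) (hkm : k < m) : R k m = 0 := by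
  have h := two_mul_R_eq_fwdDiff_iter hk m
  rw [fwdDiff_iter_pow_eq_zero_of_lt (by omega)] at h
  simpa using h

lemma R_zero_right {k : ℕ} (hk : k ≠ 0) : R k 0 = 0 := by
  simp [R, hk]

lemma R_one_one : R 1 1 = 1 := by
  simp [R, sum_range_succ]

lemma choose_succ_succ_mul (n j : ℕ) :
    (n + 2).choose (j + 1) * ((j + 1) * (n + 1 - j)) = (n + 2) * (n + 1) * n.choose j := by
  rw [← mul_assoc, ← Nat.add_one_mul_choose_eq, mul_assoc, ← Nat.choose_mul_succ_eq]
  ring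

lemma R_succ_succ (k m : ℕ) :
    R (k + 1) (m + 1) = (2 * m + 2) * (2 * m + 1) * R k m + (m + 1) ^ 2 * R k (m + 1) := by
  simp only [R_eq_sum, mul_sum]
  rw [sum_range_succ' _ (m + 1), sum_range_succ' _ (m + 1), ← add_assoc, ← sum_add_distrib]
  congr 1
  · refine sum_congr rfl fun j hj ↦ ?_
    have hj : j ≤ m := by simpa [Nat.lt_succ_iff] using hj
    have key : ((2 * m + 2).choose (j + 1) : ℤ) * ((j + 1) * (2 * m + 1 - j))
        = (2 * m + 2) * (2 * m + 1) * (2 * m).choose j := by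
      have h := congrArg (Nat.cast : ℕ → ℤ) (choose_succ_succ_mul (2 * m) j)
      push_cast [Nat.sub_add_comm (show j ≤ 2 * m by omega),
        Nat.cast_sub (show j ≤ 2 * m by omega)] at h
      linear_combination h
    rw [show 2 * (m + 1) = 2 * m + 2 by ring]
    push_cast
    linear_combination (-1 : ℤ) ^ j * ((m : ℤ) - j) ^ (2 * k) * key
  · simp only [pow_zero, choose_zero_right, cast_one, mul_one, cast_add, CharP.cast_eq_zero,
      sub_zero, one_mul]
    ring

lemma sum_range_succ_eq_sum_Icc_one {M : Type*} [AddCommMonoid M] {f : ℕ → M} (h0 : f 0 = 0)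
    (k : ℕ) : ∑ m ∈ range (k + 1), f m = ∑ m ∈ Icc 1 k, f m := by
  rw [Nat.range_succ_eq_Icc_zero, ← Finset.insert_Icc_succ_left_eq_Icc (Nat.zero_le k),
    sum_insert (by simp), h0, zero_add]
  rfl

-- The central factorial number `T(2k, 2m)`.
def centralFactorial (k m : ℕ) : ℚ := 2 * R k m / (2 * m)!

lemma centralFactorial_succ_succ (k m : ℕ) :
    centralFactorial (k + 1) (m + 1) =
      centralFactorial k m + (m + 1) ^ 2 * centralFactorial k (m + 1) := by
  have hfac : ((2 * (m + 1))! : ℚ) = (2 * m + 2) * (2 * m + 1) * (2 * m)! := by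
    rw [show 2 * (m + 1) = 2 * m + 1 + 1 by ring, factorial_succ, factorial_succ]
    push_cast; ring
  simp only [centralFactorial, R_succ_succ, hfac]
  push_cast
  field_simp

lemma centralFactorial_eq_zero_of_lt {k m : ℕ} (hk : k ≠ 0) (hkm : k < m) :
    centralFactorial k m = 0 := by
  simp [centralFactorial, R_eq_zero_of_lt hk hkm]

lemma centralFactorial_zero_right {k : ℕ} (hk : k ≠ 0) : centralFactorial k 0 = 0 := by
  simp [centralFactorial, R_zero_right hk]

lemma pow_two_mul_eq_sum_centralFactorial {K : Type*} [Field K] [CharZero K] {k : ℕ}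
    (hk : 1 ≤ k) (x : K) :
    x ^ (2 * k) =
      ∑ m ∈ range (k + 1), (centralFactorial k m : K) * ∏ j ∈ range m, (x ^ 2 - j ^ 2) := by
  induction k, hk using Nat.le_induction with
  | base => simp [sum_range_succ, centralFactorial, R_one_one, R_zero_right]
  | succ k hk ih =>
    set P : ℕ → K := fun m ↦ ∏ j ∈ range m, (x ^ 2 - j ^ 2)
    have hP : ∀ m : ℕ, x ^ 2 * P m = P (m + 1) + m ^ 2 * P m := fun m ↦ by
      simp only [P, prod_range_succ]; ring
    have hshift : ∑ m ∈ range (k + 1), (centralFactorial k m : K) * (m ^ 2 * P m) =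
        ∑ m ∈ range (k + 1), (centralFactorial k (m + 1) : K) * ((m + 1) ^ 2 * P (m + 1)) := by
      rw [sum_range_succ', sum_range_succ,
        centralFactorial_eq_zero_of_lt (m := k + 1) (by omega) (by omega)]
      simp
    calc x ^ (2 * (k + 1)) = x ^ 2 * x ^ (2 * k) := by ring
      _ = ∑ m ∈ range (k + 1), (centralFactorial k m : K) * (P (m + 1) + m ^ 2 * P m) := by
        rw [ih, mul_sum]
        exact sum_congr rfl fun m _ ↦ by rw [← hP]; ring
      _ = ∑ m ∈ range (k + 1 + 1), (centralFactorial (k + 1) m : K) * P m := by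
        rw [sum_range_succ' _ (k + 1), centralFactorial_zero_right (by omega)]
        simp only [mul_add, sum_add_distrib, hshift, centralFactorial_succ_succ]
        push_cast
        simp only [zero_mul, add_zero, ← sum_add_distrib]
        exact sum_congr rfl fun m _ ↦ by ring

section Telescoping

variable {K : Type*} [CommRing K]

lemma prod_range_add_add_one_mul (x : K) (M : ℕ) :
    (∏ j ∈ range M, (x + (j + 1))) * x = (∏ j ∈ range M, (x + j)) * (x + M) := by
  simpa using (prod_range_succ' (fun j : ℕ ↦ x + j) M).symm.trans (prod_range_succ _ M)

lemma prod_range_sub_add_one_mul (x : K) (M : ℕ) :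
    (∏ j ∈ range M, (x - (j + 1))) * x = (∏ j ∈ range M, (x - j)) * (x - M) := by
  simpa using (prod_range_succ' (fun j : ℕ ↦ x - j) M).symm.trans (prod_range_succ _ M)

variable [IsDomain K]

-- `F x - F (x - 1)` for `F x = (2x + 1) ∏_{j < M} (x(x+1) - j(j+1))`.
lemma telescope_prod_sq_sub_sq {x : K} (hx : x ≠ 0) (M : ℕ) :
    (2 * x + 1) * ∏ j ∈ range M, (x * (x + 1) - j * (j + 1))
      - (2 * x - 1) * ∏ j ∈ range M, ((x - 1) * x - j * (j + 1))
      = 2 * (2 * M + 1) * ∏ j ∈ range M, (x ^ 2 - j ^ 2) := by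
  have hA : ∏ j ∈ range M, (x * (x + 1) - j * (j + 1))
      = (∏ j ∈ range M, (x - j)) * ∏ j ∈ range M, (x + (j + 1)) := by
    rw [← prod_mul_distrib]; exact prod_congr rfl fun j _ ↦ by ring
  have hB : ∏ j ∈ range M, ((x - 1) * x - j * (j + 1))
      = (∏ j ∈ range M, (x - (j + 1))) * ∏ j ∈ range M, (x + j) := by
    rw [← prod_mul_distrib]; exact prod_congr rfl fun j _ ↦ by ring
  have hC : ∏ j ∈ range M, (x ^ 2 - j ^ 2)
      = (∏ j ∈ range M, (x - j)) * ∏ j ∈ range M, (x + j) := by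
    rw [← prod_mul_distrib]; exact prod_congr rfl fun j _ ↦ by ring
  refine mul_left_cancel₀ hx ?_
  rw [hA, hB, hC]
  linear_combination (2 * x + 1) * (∏ j ∈ range M, (x - j)) * prod_range_add_add_one_mul x M
    - (2 * x - 1) * (∏ j ∈ range M, (x + j)) * prod_range_sub_add_one_mul x M

variable [CharZero K]

lemma sum_Icc_prod_sq_sub_sq {m : ℕ} (hm : m ≠ 0) (n : ℕ) :
    2 * (2 * m + 1) * ∑ i ∈ Icc 1 n, ∏ j ∈ range m, ((i : K) ^ 2 - j ^ 2)
      = (2 * n + 1) * ∏ j ∈ range m, ((n : K) * (n + 1) - j * (j + 1)) := by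
  induction n with
  | zero => simp [prod_eq_zero (mem_range.2 (Nat.pos_of_ne_zero hm))]
  | succ n ih =>
    rw [sum_Icc_succ_top (by omega), mul_add, ih]
    have h := telescope_prod_sq_sub_sq (Nat.cast_add_one_ne_zero (R := K) n) m
    rw [add_sub_cancel_right] at h
    push_cast
    linear_combination -h

end Telescoping

open Polynomial in
lemma prod_sub_eq_sum_Ps {K : Type*} [CommRing K] (m : ℕ) (y : K) :
    ∏ j ∈ range m, (y - j * (j + 1)) = ∑ r ∈ range (m + 1), (Ps m r : K) * y ^ r := by
  set p : ℤ[X] := ∏ j ∈ range m, (X - C ((j * (j + 1) : ℕ) : ℤ))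
  have hdeg : p.natDegree < m + 1 := by
    rw [natDegree_prod_of_monic _ _ fun j _ ↦ monic_X_sub_C _,
      sum_congr rfl fun j _ ↦ natDegree_X_sub_C _]
    simp
  have h := aeval_eq_sum_range' hdeg y
  simp only [p, map_prod, map_sub, aeval_X, aeval_C, zsmul_eq_mul] at h
  simpa [Ps] using h

lemma Ps_zero_right {m : ℕ} (hm : m ≠ 0) : Ps m 0 = 0 := by
  rw [Ps, Polynomial.coeff_zero_eq_eval_zero, Polynomial.eval_prod]
  exact prod_eq_zero (mem_range.2 (Nat.pos_of_ne_zero hm)) (by simp)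

lemma cast_S {K : Type*} [CommSemiring K] (k n : ℕ) :
    (S k n : K) = ∑ i ∈ Icc 1 n, (i : K) ^ k := by
  simp [S]

lemma S_one_eq (n : ℕ) : (S 1 n : ℚ) = n * (n + 1) / 2 := by
  induction n with
  | zero => simp [S]
  | succ n ih =>
    rw [cast_S] at ih ⊢
    rw [sum_Icc_succ_top (by omega), ih]
    push_cast; ring

lemma S_two_eq (n : ℕ) : (S 2 n : ℚ) = n * (n + 1) * (2 * n + 1) / 6 := by
  induction n with
  | zero => simp [S]
  | succ n ih =>
    rw [cast_S] at ih ⊢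
    rw [sum_Icc_succ_top (by omega), ih]
    push_cast; ring

lemma sum_Icc_pow_two_mul {K : Type*} [Field K] [CharZero K] {k : ℕ} (hk : 1 ≤ k) (n : ℕ) :
    ∑ i ∈ Icc 1 n, (i : K) ^ (2 * k) = (2 * n + 1) * ∑ m ∈ Icc 1 k,
      (R k m : K) / (2 * m + 1)! * ∏ j ∈ range m, ((n : K) * (n + 1) - j * (j + 1)) := by
  calc ∑ i ∈ Icc 1 n, (i : K) ^ (2 * k)
      = ∑ m ∈ range (k + 1), (centralFactorial k m : K) *
          ∑ i ∈ Icc 1 n, ∏ j ∈ range m, ((i : K) ^ 2 - j ^ 2) := by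
        simp only [pow_two_mul_eq_sum_centralFactorial hk, mul_sum]
        exact sum_comm
    _ = ∑ m ∈ Icc 1 k, (centralFactorial k m : K) *
          ∑ i ∈ Icc 1 n, ∏ j ∈ range m, ((i : K) ^ 2 - j ^ 2) := by
        refine sum_range_succ_eq_sum_Icc_one ?_ k
        simp [centralFactorial_zero_right (show k ≠ 0 by omega)]
    _ = _ := by
        rw [mul_sum]
        refine sum_congr rfl fun m hm ↦ ?_
        have hm : m ≠ 0 := by simp only [mem_Icc] at hm; omega
        have hsum := sum_Icc_prod_sq_sub_sq (K := K) hm n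
        have hfac : ((2 * m + 1)! : K) = (2 * m + 1) * (2 * m)! := by
          push_cast [factorial_succ]; ring
        have h2m : (2 * m + 1 : K) ≠ 0 := by exact_mod_cast (2 * m).succ_ne_zero
        have hf0 : ((2 * m)! : K) ≠ 0 := Nat.cast_ne_zero.2 (factorial_ne_zero _)
        rw [centralFactorial, hfac]
        push_cast
        field_simp
        linear_combination (R k m : K) * hsum

theorem stmt_12_general (k n : ℕ) (hk : 1 ≤ k) :
    (S (2 * k) n : ℚ) =
      (S 2 n : ℚ) * ∑ r ∈ Finset.Icc 1 k, b k r * (S 1 n : ℚ) ^ (r - 1) := by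
  calc (S (2 * k) n : ℚ)
      = (2 * n + 1) * ∑ m ∈ Icc 1 k, ∑ r ∈ Icc 1 m,
          (R k m : ℚ) / (2 * m + 1)! * Ps m r * ((n : ℚ) * (n + 1)) ^ r := by
        rw [cast_S, sum_Icc_pow_two_mul hk]
        refine congrArg _ (sum_congr rfl fun m hm ↦ ?_)
        have hm : m ≠ 0 := by simp only [mem_Icc] at hm; omega
        rw [prod_sub_eq_sum_Ps, ← sum_range_succ_eq_sum_Icc_one (by simp [Ps_zero_right hm]),
          mul_sum]
        simp only [mul_assoc]
    _ = (2 * n + 1) * ∑ r ∈ Icc 1 k, ∑ m ∈ Icc r k,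
          (R k m : ℚ) / (2 * m + 1)! * Ps m r * ((n : ℚ) * (n + 1)) ^ r := by
        rw [sum_comm' fun m r ↦ ?_]
        simp only [mem_Icc]; omega
    _ = _ := by
        rw [S_two_eq, S_one_eq]
        simp only [b, mul_sum, sum_mul]
        refine sum_congr rfl fun r hr ↦ sum_congr rfl fun m _ ↦ ?_
        obtain ⟨r, rfl⟩ : ∃ r', r = r' + 1 := ⟨r - 1, by simp only [mem_Icc] at hr; omega⟩
        rw [add_tsub_cancel_right, div_pow]
        field_simp
        ring

theorem stmt_12 (k n : ℕ) (hk : 1 ≤ k) (hn : 1 ≤ n) :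
    (S (2 * k) n : ℚ) =
      (S 2 n : ℚ) * ∑ r ∈ Finset.Icc 1 k, b k r * (S 1 n : ℚ) ^ (r - 1) :=
  stmt_12_general k n hk
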